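/- arXiv:1803.00618 — 4 statements merged into one kernel-verified Lean document; each statement's English description precedes it below -/
import Mathlib

section
/- Let ℓ₁, ℓ₂, ℓ₃ be literals over Boolean variables b₁, …, bₙ, and let x₁, …, xₙ be nonnegative reals with xᵢ² − xᵢ = 0 for all i. Define L_k := x_i if ℓ_k is the positive literal on variable i, and L_k := 1 − x_i if ℓ_k is the negative literal on variable i. Then there exists s ≥ 0 with L₁ + L₂ + L₃ − s − 1 = 0 if and only if the Boolean assignment bᵢ := (xᵢ = 1) satisfies the clause ℓ₁ ∨ ℓ₂ ∨ ℓ₃. -/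
/-- A literal is a pair of a variable index and a polarity (`true` = positive). -/
theorem clause_gadget_iff (n : ℕ) (lit : Fin 3 → Fin n × Bool)
    (x : Fin n → ℝ) (hx : ∀ i, 0 ≤ x i) (hbin : ∀ i, x i ^ 2 - x i = 0)
    (L : Fin 3 → ℝ)
    (hL : ∀ k, L k = if (lit k).2 then x (lit k).1 else 1 - x (lit k).1) :
    (∃ s : ℝ, 0 ≤ s ∧ L 0 + L 1 + L 2 - s - 1 = 0) ↔
      (∃ k : Fin 3, if (lit k).2 then x (lit k).1 = 1 else ¬ x (lit k).1 = 1) := by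
  have hx01 : ∀ i, x i = 0 ∨ x i = 1 := by
    intro i
    have h := hbin i
    have : x i * (x i - 1) = 0 := by ring_nf; nlinarith [hbin i]
    rcases mul_eq_zero.mp this with h1 | h1
    · exact Or.inl h1
    · exact Or.inr (by linarith)
  have key : ∀ k, (L k = 0 ∨ L k = 1) ∧
      (L k = 1 ↔ if (lit k).2 then x (lit k).1 = 1 else ¬ x (lit k).1 = 1) := by
    intro k
    have h := hL k
    rcases hx01 (lit k).1 with h1 | h1 <;> cases hb : (lit k).2 <;>
      simp [hb, h1] at h ⊢ <;> simp [h, h1] <;> norm_num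
  constructor
  · rintro ⟨s, hs, hsum⟩
    by_contra hc
    push_neg at hc
    have h0 : ∀ k, L k = 0 := by
      intro k
      rcases (key k).1 with h | h
      · exact h
      · exact absurd ((key k).2.mp h) (by simpa using hc k)
    simp [h0] at hsum
    linarith
  · rintro ⟨k, hk⟩
    have hk1 : L k = 1 := (key k).2.mpr hk
    have h0 : ∀ j, 0 ≤ L j := by
      intro j; rcases (key j).1 with h | h <;> simp [h]
    refine ⟨L 0 + L 1 + L 2 - 1, ?_, by ring⟩
    fin_cases k <;> simp at hk1 <;>
      nlinarith [h0 0, h0 1, h0 2]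
end

section
/- Let φ be a 3-CNF formula with n Boolean variables and p clauses. The system consisting of the n equations xᵢ² − xᵢ = 0 (with xᵢ ≥ 0) together with the p clause equations L₁ʲ + L₂ʲ + L₃ʲ − sⱼ − 1 = 0 (with sⱼ ≥ 0), where L_kʲ is xᵢ if the k-th literal of clause j is the positive literal on variable i and 1 − xᵢ if it is the negative literal, has a solution in nonnegative reals if and only if φ is satisfiable. -/
/-- A 3-CNF formula is given by `p` clauses, each a triple of literals; a literal is a
variable index together with a polarity (`true` = positive). -/
theorem reduction_system_solvable_iff_sat (n p : ℕ)
    (φ : Fin p → Fin 3 → Fin n × Bool) :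
    (∃ (x : Fin n → ℝ) (s : Fin p → ℝ),
        (∀ i, 0 ≤ x i) ∧ (∀ j, 0 ≤ s j) ∧
        (∀ i, x i ^ 2 - x i = 0) ∧
        (∀ j : Fin p,
          (∑ k : Fin 3,
            (if (φ j k).2 then x (φ j k).1 else 1 - x (φ j k).1)) - s j - 1 = 0)) ↔
      (∃ b : Fin n → Bool,
        ∀ j : Fin p, ∃ k : Fin 3,
          (if (φ j k).2 then b (φ j k).1 else !(b (φ j k).1)) = true) := by
  constructor
  · rintro ⟨x, s, hx0, hs0, hxb, hcl⟩
    have hx01 : ∀ i, x i = 0 ∨ x i = 1 := by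
      intro i
      have h : x i * (x i - 1) = 0 := by have := hxb i; ring_nf; nlinarith [hxb i]
      rcases mul_eq_zero.mp h with h | h
      · exact Or.inl h
      · exact Or.inr (by linarith)
    refine ⟨fun i => decide (x i = 1), fun j => ?_⟩
    by_contra h
    push_neg at h
    have hz : ∀ k : Fin 3, (if (φ j k).2 then x (φ j k).1 else 1 - x (φ j k).1) = 0 := by
      intro k
      have hk := h k
      rcases hx01 (φ j k).1 with h0 | h1
      · cases hb : (φ j k).2 with
        | true => simp [hb, h0]
        | false => simp [hb, h0] at hk
      · cases hb : (φ j k).2 with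
        | true => simp [hb, h1] at hk
        | false => simp [hb, h1]
    have hsum := hcl j
    rw [Fin.sum_univ_three] at hsum
    rw [hz 0, hz 1, hz 2] at hsum
    have := hs0 j
    linarith
  · rintro ⟨b, hb⟩
    set x : Fin n → ℝ := fun i => if b i then 1 else 0 with hx
    have hx01 : ∀ i, x i = 0 ∨ x i = 1 := by
      intro i; by_cases h : b i <;> simp [hx, h]
    have hnn : ∀ i, (0:ℝ) ≤ x i := by
      intro i; rcases hx01 i with h | h <;> rw [h] <;> norm_num
    have hlit : ∀ j k, (0:ℝ) ≤ (if (φ j k).2 then x (φ j k).1 else 1 - x (φ j k).1) := by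
      intro j k
      rcases hx01 (φ j k).1 with h | h <;> cases hpol : (φ j k).2 <;> simp [hpol, h]
    have hsum1 : ∀ j : Fin p,
        (1:ℝ) ≤ ∑ k : Fin 3, (if (φ j k).2 then x (φ j k).1 else 1 - x (φ j k).1) := by
      intro j
      obtain ⟨k, hk⟩ := hb j
      have hone : (if (φ j k).2 then x (φ j k).1 else 1 - x (φ j k).1) = 1 := by
        cases hpol : (φ j k).2 <;> simp [hpol] at hk ⊢ <;> simp [hx, hk]
      calc (1:ℝ) = (if (φ j k).2 then x (φ j k).1 else 1 - x (φ j k).1) := hone.symm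
        _ ≤ _ := Finset.single_le_sum (fun k _ => hlit j k) (Finset.mem_univ k)
    refine ⟨x, fun j => (∑ k : Fin 3,
      (if (φ j k).2 then x (φ j k).1 else 1 - x (φ j k).1)) - 1, hnn,
      fun j => sub_nonneg.mpr (hsum1 j), fun i => ?_, fun j => by ring⟩
    rcases hx01 i with h | h <;> rw [h] <;> norm_num
end

section
/- If a satisfying assignment b₁, …, bₙ of a 3-CNF formula φ is given, then setting xᵢ := 1 if bᵢ is true and xᵢ := 0 otherwise, and sⱼ := L₁ʲL₂ʲ + L₁ʲL₃ʲ + L₂ʲL₃ʲ − L₁ʲL₂ʲL₃ʲ for each clause j (with L_kʲ the real encoding of the k-th literal of clause j), yields nonnegative real values solving all n equations xᵢ² − xᵢ = 0 and all p clause equations L₁ʲ + L₂ʲ + L₃ʲ − sⱼ − 1 = 0. -/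
/-!
Under the encoding `xᵢ ∈ {0, 1}` every literal value `L` is the `0/1` indicator of the literal's
truth, so `xᵢ² = xᵢ` and `L ∈ [0, 1]`. With `s = L₁L₂ + L₁L₃ + L₂L₃ − L₁L₂L₃` the clause equation
is the identity `L₁ + L₂ + L₃ − s − 1 = −(1 − L₁)(1 − L₂)(1 − L₃)`, whose right side vanishes as
soon as one literal of the clause is true; and `s = L₁L₂ + L₃(L₁ + L₂(1 − L₁)) ≥ 0` on `[0, 1]³`.
-/

open Set

def clauseSlack (a : Fin 3 → ℝ) : ℝ :=
  a 0 * a 1 + a 0 * a 2 + a 1 * a 2 - a 0 * a 1 * a 2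

lemma clauseSlack_nonneg {a : Fin 3 → ℝ} (h₀ : a 0 ∈ Icc 0 1) (h₁ : 0 ≤ a 1) (h₂ : 0 ≤ a 2) :
    0 ≤ clauseSlack a := by
  have hform : clauseSlack a = a 0 * a 1 + a 2 * (a 0 + a 1 * (1 - a 0)) := by
    unfold clauseSlack; ring
  have h₀' : 0 ≤ 1 - a 0 := sub_nonneg.2 h₀.2
  rw [hform]
  exact add_nonneg (mul_nonneg h₀.1 h₁) (mul_nonneg h₂ (add_nonneg h₀.1 (mul_nonneg h₁ h₀')))

lemma clause_equation_of_exists_eq_one {a : Fin 3 → ℝ} (h : ∃ k, a k = 1) :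
    a 0 + a 1 + a 2 - clauseSlack a - 1 = 0 := by
  obtain ⟨k, hk⟩ := h
  have hprod : ∏ i, (1 - a i) = 0 :=
    Finset.prod_eq_zero (Finset.mem_univ k) (by rw [hk, sub_self])
  rw [Fin.prod_univ_three] at hprod
  unfold clauseSlack
  linear_combination -hprod

lemma literal_encoding_eq_indicator (pos u : Bool) :
    (if pos then (if u then 1 else 0 : ℝ) else 1 - if u then 1 else 0)
      = if (if pos then u else !u) then 1 else 0 := by
  cases pos <;> cases u <;> norm_num

lemma indicator_mem_Icc (u : Bool) : (if u then 1 else 0 : ℝ) ∈ Icc 0 1 := by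
  cases u <;> norm_num

/-- From a satisfying assignment of a 3-CNF formula, the canonical values for the
variables and slack variables solve all equations of the reduced system. -/
theorem satisfying_assignment_solves_system (n p : ℕ)
    (φ : Fin p → Fin 3 → Fin n × Bool) (b : Fin n → Bool)
    (hsat : ∀ j : Fin p, ∃ k : Fin 3,
      (if (φ j k).2 then b (φ j k).1 else !(b (φ j k).1)) = true)
    (x : Fin n → ℝ) (hxdef : ∀ i, x i = if b i then 1 else 0)
    (L : Fin p → Fin 3 → ℝ)
    (hL : ∀ j k, L j k = if (φ j k).2 then x (φ j k).1 else 1 - x (φ j k).1)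
    (s : Fin p → ℝ)
    (hsdef : ∀ j, s j = L j 0 * L j 1 + L j 0 * L j 2 + L j 1 * L j 2
                        - L j 0 * L j 1 * L j 2) :
    (∀ i, 0 ≤ x i) ∧ (∀ j, 0 ≤ s j) ∧
    (∀ i, x i ^ 2 - x i = 0) ∧
    (∀ j, L j 0 + L j 1 + L j 2 - s j - 1 = 0) := by
  have hLind : ∀ j k, L j k =
      if (if (φ j k).2 then b (φ j k).1 else !(b (φ j k).1)) then 1 else 0 := by
    intro j k
    rw [hL, hxdef]
    exact literal_encoding_eq_indicator _ _
  have hLIcc : ∀ j k, L j k ∈ Icc 0 1 := fun j k => hLind j k ▸ indicator_mem_Icc _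
  refine ⟨fun i => ?_, fun j => ?_, fun i => ?_, fun j => ?_⟩
  · exact hxdef i ▸ (indicator_mem_Icc (b i)).1
  · rw [hsdef]
    exact clauseSlack_nonneg (hLIcc j 0) (hLIcc j 1).1 (hLIcc j 2).1
  · rw [hxdef]
    split_ifs <;> norm_num
  · obtain ⟨k, hk⟩ := hsat j
    rw [hsdef]
    exact clause_equation_of_exists_eq_one ⟨k, by rw [hLind, hk, if_pos rfl]⟩
end

section
/- Conversely, if nonnegative reals x₁, …, xₙ, s₁, …, s_p solve all equations xᵢ² − xᵢ = 0 and all clause equations L₁ʲ + L₂ʲ + L₃ʲ − sⱼ − 1 = 0 of the reduced system, then each xᵢ ∈ {0, 1} and the Boolean assignment bᵢ := (xᵢ = 1) satisfies every clause of the 3-CNF formula φ. -/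
/-- Conversely, any nonnegative real solution of the reduced system yields a
satisfying Boolean assignment of the 3-CNF formula. -/
theorem system_solution_gives_satisfying_assignment (n p : ℕ)
    (φ : Fin p → Fin 3 → Fin n × Bool)
    (x : Fin n → ℝ) (s : Fin p → ℝ)
    (hx : ∀ i, 0 ≤ x i) (hs : ∀ j, 0 ≤ s j)
    (hbin : ∀ i, x i ^ 2 - x i = 0)
    (hclause : ∀ j : Fin p,
      (∑ k : Fin 3, (if (φ j k).2 then x (φ j k).1 else 1 - x (φ j k).1))
        - s j - 1 = 0) :
    (∀ i, x i ∈ ({0, 1} : Set ℝ)) ∧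
    (∀ j : Fin p, ∃ k : Fin 3,
      (if (φ j k).2 then decide (x (φ j k).1 = 1)
        else !(decide (x (φ j k).1 = 1))) = true) := by
  have h01 : ∀ i, x i = 0 ∨ x i = 1 := by
    intro i
    have h := hbin i
    have : x i * (x i - 1) = 0 := by ring_nf; linarith [hbin i]
    rcases mul_eq_zero.1 this with h | h
    · exact Or.inl h
    · exact Or.inr (by linarith)
  refine ⟨fun i => by rcases h01 i with h | h <;> simp [h], fun j => ?_⟩
  by_contra hcon
  push_neg at hcon
  have hlit : ∀ k : Fin 3,
      (if (φ j k).2 then x (φ j k).1 else 1 - x (φ j k).1) = 0 := by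
    intro k
    have hk := hcon k
    rcases h01 (φ j k).1 with h | h
    · cases hb : (φ j k).2
      · simp [hb, h] at hk
      · simp [hb, h]
    · cases hb : (φ j k).2
      · simp [hb, h]
      · simp [hb, h] at hk
  have hsum := hclause j
  rw [Fin.sum_univ_three] at hsum
  rw [hlit 0, hlit 1, hlit 2] at hsum
  have := hs j
  linarith
end
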